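/- Let d > 2, λ ∈ ℝ, and let v be a smooth positive function on a closed Riemannian manifold (M^n,g) satisfying Δv = (d/2)v^{−1}|∇v|² + (2/(d−2))v^{−1} − (2λ/(d−2))v. Define φ := Δv + (4λ/(d−2))v. Then v Δφ + (2−d)⟨∇v, ∇φ⟩ = d|∇²v − (Δv/n)g|² + (d/n − 1)(Δv)² + d·Ric(∇v,∇v) − (4(d−1)λ/(d−2))|∇v|². -/

import Mathlib

noncomputable section

open Real MeasureTheory Metric

variable {n : ℕ}

/-- `i`-th partial derivative of `v` at `x` (Euclidean coordinates). -/
def pd (v : EuclideanSpace ℝ (Fin n) → ℝ) (i : Fin n) (x : EuclideanSpace ℝ (Fin n)) : ℝ :=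
  fderiv ℝ v x (EuclideanSpace.single i 1)

/-- Hessian component `(∇²v)_{ij}` at `x`. -/
def hess (v : EuclideanSpace ℝ (Fin n) → ℝ) (i j : Fin n) (x : EuclideanSpace ℝ (Fin n)) : ℝ :=
  pd (pd v j) i x

/-- Laplacian `Δv` at `x`. -/
def lap (v : EuclideanSpace ℝ (Fin n) → ℝ) (x : EuclideanSpace ℝ (Fin n)) : ℝ :=
  ∑ i, hess v i i x

/-- Divergence of a vector field given by its component functions. -/
def vdiv (X : Fin n → EuclideanSpace ℝ (Fin n) → ℝ) (x : EuclideanSpace ℝ (Fin n)) : ℝ :=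
  ∑ i, pd (X i) i x

section Aux

variable {f g : EuclideanSpace ℝ (Fin n) → ℝ} {x : EuclideanSpace ℝ (Fin n)} {i j : Fin n}

@[fun_prop]
lemma contDiff_pd (hf : ContDiff ℝ (⊤ : ℕ∞) f) (i : Fin n) : ContDiff ℝ (⊤ : ℕ∞) (pd f i) := by
  have h1 : ContDiff ℝ (⊤ : ℕ∞) (fderiv ℝ f) := hf.fderiv_right le_rfl
  exact (ContinuousLinearMap.apply ℝ ℝ (EuclideanSpace.single i 1)).contDiff.comp h1

@[fun_prop]
lemma differentiable_pd (hf : ContDiff ℝ (⊤ : ℕ∞) f) (i : Fin n) : Differentiable ℝ (pd f i) :=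
  (contDiff_pd hf i).differentiable (by simp)

@[fun_prop]
lemma contDiff_hess (hf : ContDiff ℝ (⊤ : ℕ∞) f) (i j : Fin n) : ContDiff ℝ (⊤ : ℕ∞) (hess f i j) :=
  contDiff_pd (contDiff_pd hf j) i

@[fun_prop]
lemma differentiable_hess (hf : ContDiff ℝ (⊤ : ℕ∞) f) (i j : Fin n) : Differentiable ℝ (hess f i j) :=
  (contDiff_hess hf i j).differentiable (by simp)

lemma pd_add (hf : DifferentiableAt ℝ f x) (hg : DifferentiableAt ℝ g x) :
    pd (fun y => f y + g y) i x = pd f i x + pd g i x := by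
  simp [pd, fderiv_fun_add hf hg]

lemma pd_sub (hf : DifferentiableAt ℝ f x) (hg : DifferentiableAt ℝ g x) :
    pd (fun y => f y - g y) i x = pd f i x - pd g i x := by
  simp [pd, fderiv_fun_sub hf hg]

lemma pd_neg : pd (fun y => -f y) i x = -pd f i x := by
  simp [pd, fderiv_neg]

lemma pd_mul (hf : DifferentiableAt ℝ f x) (hg : DifferentiableAt ℝ g x) :
    pd (fun y => f y * g y) i x = f x * pd g i x + g x * pd f i x := by
  simp [pd, fderiv_fun_mul hf hg]

lemma pd_const_mul (hf : DifferentiableAt ℝ f x) (c : ℝ) :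
    pd (fun y => c * f y) i x = c * pd f i x := by
  simp [pd, fderiv_const_mul hf c]

lemma pd_const {c : ℝ} : pd (fun _ => c) i x = 0 := by
  simp [pd]

lemma pd_sum {ι : Type*} {s : Finset ι} {F : ι → EuclideanSpace ℝ (Fin n) → ℝ}
    (hF : ∀ k ∈ s, DifferentiableAt ℝ (F k) x) :
    pd (fun y => ∑ k ∈ s, F k y) i x = ∑ k ∈ s, pd (F k) i x := by
  simp [pd, fderiv_fun_sum hF]

lemma pd_inv (hf : DifferentiableAt ℝ f x) (hfx : f x ≠ 0) :
    pd (fun y => (f y)⁻¹) i x = -(f x ^ 2)⁻¹ * pd f i x := by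
  have h : HasFDerivAt (fun y => (f y)⁻¹) ((-(f x ^ 2)⁻¹) • fderiv ℝ f x) x :=
    (hasDerivAt_inv hfx).comp_hasFDerivAt x hf.hasFDerivAt
  simp [pd, h.fderiv]

lemma pd_sq (hf : DifferentiableAt ℝ f x) :
    pd (fun y => f y ^ 2) i x = 2 * f x * pd f i x := by
  have := pd_mul (f := f) (g := f) (x := x) (i := i) hf hf
  simp only [← sq] at this
  rw [this]; ring

lemma pd_pd {v : EuclideanSpace ℝ (Fin n) → ℝ} :
    pd (pd v j) i x = hess v i j x := rfl

lemma hess_eq_second (hf : ContDiff ℝ (⊤ : ℕ∞) f) (i j : Fin n) (x) :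
    hess f i j x
      = fderiv ℝ (fderiv ℝ f) x (EuclideanSpace.single i 1) (EuclideanSpace.single j 1) := by
  have hdf : DifferentiableAt ℝ (fderiv ℝ f) x :=
    ((hf.fderiv_right (m := (⊤ : ℕ∞)) le_rfl).differentiable (by simp)).differentiableAt
  have h : pd f j = fun y => (fderiv ℝ f y) ((fun _ => EuclideanSpace.single j 1) y) := rfl
  rw [hess, pd, h, fderiv_clm_apply hdf (differentiableAt_const _)]
  simp

lemma hess_symm (hf : ContDiff ℝ (⊤ : ℕ∞) f) (i j : Fin n) (x) : hess f i j x = hess f j i x := by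
  rw [hess_eq_second hf, hess_eq_second hf]
  exact (hf.contDiffAt.isSymmSndFDerivAt (by rw [minSmoothness_of_isRCLikeNormedField]; exact WithTop.coe_le_coe.mpr le_top)) _ _

lemma lap_pd_comm {v : EuclideanSpace ℝ (Fin n) → ℝ} (hv : ContDiff ℝ (⊤ : ℕ∞) v) (j : Fin n)
    (x : EuclideanSpace ℝ (Fin n)) :
    ∑ i, pd (hess v i j) i x = pd (lap v) j x := by
  have h1 : pd (lap v) j x = ∑ i, pd (hess v i i) j x := by
    have h : lap v = fun y => ∑ i, hess v i i y := rfl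
    rw [h, pd_sum (fun k _ => (differentiable_hess hv k k).differentiableAt)]
  rw [h1]
  refine Finset.sum_congr rfl fun i _ => ?_
  have e1 : pd (pd v i) j = pd (pd v j) i := funext fun y => hess_symm hv j i y
  calc pd (hess v i j) i x = pd (pd (pd v j) i) i x := rfl
    _ = pd (pd (pd v i) j) i x := by rw [e1]
    _ = hess (pd v i) i j x := rfl
    _ = hess (pd v i) j i x := hess_symm (contDiff_pd hv i) i j x
    _ = pd (hess v i i) j x := rfl

end Aux

set_option maxHeartbeats 2000000 in
/-- P-function identity (flat case, where `Ric ≡ 0`, so the term `d·Ric(∇v,∇v)` appears as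
`d * 0`): if `Δv = (d/2)v^{−1}|∇v|² + (2/(d−2))v^{−1} − (2λ/(d−2))v` and
`φ := Δv + (4λ/(d−2))v`, then
`vΔφ + (2−d)⟨∇v,∇φ⟩ = d|∇²v − (Δv/n)g|² + (d/n − 1)(Δv)² + d·Ric(∇v,∇v)
  − (4(d−1)λ/(d−2))|∇v|²`. -/
theorem stmt18 (n : ℕ) (hn : 0 < n) (d lam : ℝ) (hd : 2 < d)
    (v : EuclideanSpace ℝ (Fin n) → ℝ) (hv : ContDiff ℝ (⊤ : ℕ∞) v) (hpos : ∀ x, 0 < v x)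
    (hpde : ∀ x, lap v x = d / 2 * (v x)⁻¹ * (∑ i, (pd v i x) ^ 2)
      + (2 / (d - 2)) * (v x)⁻¹ - (2 * lam / (d - 2)) * v x)
    (φ : EuclideanSpace ℝ (Fin n) → ℝ)
    (hφ : φ = fun x => lap v x + (4 * lam / (d - 2)) * v x) :
    ∀ x, v x * lap φ x + (2 - d) * (∑ i, pd v i x * pd φ i x)
      = d * (∑ i, ∑ j, (hess v i j x - (if i = j then lap v x / n else 0)) ^ 2)
        + (d / n - 1) * (lap v x) ^ 2
        + d * 0
        - (4 * (d - 1) * lam / (d - 2)) * (∑ i, (pd v i x) ^ 2) := by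
  have hd2 : d - 2 ≠ 0 := by linarith
  have hvd : Differentiable ℝ v := hv.differentiable (by simp)
  have hvne : ∀ y, v y ≠ 0 := fun y => (hpos y).ne'
  set g : EuclideanSpace ℝ (Fin n) → ℝ := fun y => (v y)⁻¹ with hgdef
  have hgc : ContDiff ℝ (⊤ : ℕ∞) g := hv.inv hvne
  have hgd : Differentiable ℝ g := hgc.differentiable (by simp)
  have hpdg : ∀ (i : Fin n) y, pd g i y = -(g y ^ 2) * pd v i y := by
    intro i y
    rw [hgdef]
    rw [pd_inv (hvd.differentiableAt) (hvne y)]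
    simp [inv_pow]
  -- smoothness of lap v and φ
  have hlapc : ContDiff ℝ (⊤ : ℕ∞) (lap v) := by
    have h : lap v = fun y => ∑ i, hess v i i y := rfl
    rw [h]
    exact ContDiff.sum fun i _ => contDiff_hess hv i i
  have hφc : ContDiff ℝ (⊤ : ℕ∞) φ := by
    rw [hφ]; exact hlapc.add (contDiff_const.mul hv)
  have hφd : Differentiable ℝ φ := hφc.differentiable (by simp)
  -- φ in terms of v only
  have hφfun : φ = fun y => d / 2 * (g y * ∑ j, pd v j y ^ 2) + 2 / (d - 2) * g y
      + 2 * lam / (d - 2) * v y := by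
    funext y
    rw [hφ]
    show lap v y + 4 * lam / (d - 2) * v y = _
    rw [hpde y, hgdef]
    field_simp
    ring
  -- first derivative of φ
  have hpdφ : ∀ (i : Fin n) y, pd φ i y
      = d / 2 * (-(g y ^ 2) * pd v i y * (∑ j, pd v j y ^ 2)
          + g y * (2 * ∑ j, pd v j y * hess v i j y))
        + 2 / (d - 2) * (-(g y ^ 2) * pd v i y) + 2 * lam / (d - 2) * pd v i y := by
    intro i y
    rw [hφfun]
    simp (disch := intros; fun_prop) only [pd_add, pd_mul, pd_const_mul, pd_sum, pd_sq,
      pd_pd, hpdg, pd_const]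
    have eA : ∑ j : Fin n, 2 * pd v j y * hess v i j y
        = 2 * ∑ j : Fin n, pd v j y * hess v i j y := by
      rw [Finset.mul_sum]
      exact Finset.sum_congr rfl fun k _ => by ring
    rw [eA]; ring
  have hlapfun : lap v = fun y => φ y - 4 * lam / (d - 2) * v y := by
    funext y; rw [hφ]; ring
  have hpdlap : ∀ (j : Fin n) y, pd (lap v) j y = pd φ j y - 4 * lam / (d - 2) * pd v j y := by
    intro j y
    rw [hlapfun, pd_sub hφd.differentiableAt (by fun_prop), pd_const_mul hvd.differentiableAt]
  intro x
  have hsnd : ∀ i : Fin n, pd (pd φ i) i x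
      = d / 2 * ((2 * g x ^ 3 * pd v i x ^ 2 - g x ^ 2 * hess v i i x) * (∑ j, pd v j x ^ 2)
            - 4 * g x ^ 2 * pd v i x * (∑ j, pd v j x * hess v i j x)
            + 2 * g x * (∑ j, pd v j x * pd (hess v i j) i x)
            + 2 * g x * (∑ j, hess v i j x ^ 2))
        + 2 / (d - 2) * (2 * g x ^ 3 * pd v i x ^ 2 - g x ^ 2 * hess v i i x)
        + 2 * lam / (d - 2) * hess v i i x := by
    intro i
    have hfn : pd φ i = fun y =>
        d / 2 * (-(g y ^ 2) * pd v i y * (∑ j, pd v j y ^ 2)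
          + g y * (2 * ∑ j, pd v j y * hess v i j y))
        + 2 / (d - 2) * (-(g y ^ 2) * pd v i y) + 2 * lam / (d - 2) * pd v i y :=
      funext (hpdφ i)
    rw [hfn]
    simp (disch := intros; fun_prop) only [pd_add, pd_sub, pd_mul, pd_const_mul, pd_sum, pd_sq,
      pd_pd, pd_neg, hpdg, pd_const]
    have eA : ∑ j : Fin n, 2 * pd v j x * hess v i j x
        = 2 * ∑ j : Fin n, pd v j x * hess v i j x := by
      rw [Finset.mul_sum]
      exact Finset.sum_congr rfl fun k _ => by ring
    have eB : ∑ j : Fin n, (pd v j x * pd (hess v i j) i x + hess v i j x * hess v i j x)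
        = (∑ j : Fin n, pd v j x * pd (hess v i j) i x) + ∑ j : Fin n, hess v i j x ^ 2 := by
      rw [Finset.sum_add_distrib]
      congr 1
      exact Finset.sum_congr rfl fun k _ => by ring
    rw [eA, eB]; ring
  -- third-derivative double sum via commuting derivatives and the PDE
  have hTT : ∑ i : Fin n, ∑ j : Fin n, pd v j x * pd (hess v i j) i x
      = ∑ j : Fin n, pd v j x * (pd φ j x - 4 * lam / (d - 2) * pd v j x) := by
    rw [Finset.sum_comm]
    refine Finset.sum_congr rfl fun j _ => ?_
    rw [← Finset.mul_sum, lap_pd_comm hv j x, hpdlap j x]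
  have hTT2 : ∑ j : Fin n, pd v j x * (pd φ j x - 4 * lam / (d - 2) * pd v j x)
      = -(d / 2) * g x ^ 2 * (∑ j : Fin n, pd v j x ^ 2) * (∑ j : Fin n, pd v j x ^ 2)
        + d * g x * (∑ i : Fin n, pd v i x * ∑ j : Fin n, pd v j x * hess v i j x)
        - 2 / (d - 2) * g x ^ 2 * (∑ j : Fin n, pd v j x ^ 2)
        - 2 * lam / (d - 2) * (∑ j : Fin n, pd v j x ^ 2) := by
    have e : ∀ j : Fin n, pd v j x * (pd φ j x - 4 * lam / (d - 2) * pd v j x)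
        = (-(d / 2) * g x ^ 2 * (∑ k : Fin n, pd v k x ^ 2) - 2 / (d - 2) * g x ^ 2
            - 2 * lam / (d - 2)) * pd v j x ^ 2
          + (d * g x) * (pd v j x * ∑ k : Fin n, pd v k x * hess v j k x) := by
      intro j
      rw [hpdφ j x]
      ring
    rw [Finset.sum_congr rfl fun j _ => e j]
    simp only [Finset.sum_add_distrib, ← Finset.mul_sum]
    ring
  have hgrad : ∑ i : Fin n, pd v i x * pd φ i x
      = -(d / 2) * g x ^ 2 * (∑ j : Fin n, pd v j x ^ 2) * (∑ j : Fin n, pd v j x ^ 2)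
        + d * g x * (∑ i : Fin n, pd v i x * ∑ j : Fin n, pd v j x * hess v i j x)
        - 2 / (d - 2) * g x ^ 2 * (∑ j : Fin n, pd v j x ^ 2)
        + 2 * lam / (d - 2) * (∑ j : Fin n, pd v j x ^ 2) := by
    have e : ∀ j : Fin n, pd v j x * pd φ j x
        = (-(d / 2) * g x ^ 2 * (∑ k : Fin n, pd v k x ^ 2) - 2 / (d - 2) * g x ^ 2
            + 2 * lam / (d - 2)) * pd v j x ^ 2
          + (d * g x) * (pd v j x * ∑ k : Fin n, pd v k x * hess v j k x) := by
      intro j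
      rw [hpdφ j x]
      ring
    rw [Finset.sum_congr rfl fun j _ => e j]
    simp only [Finset.sum_add_distrib, ← Finset.mul_sum]
    ring
  -- Laplacian of φ in terms of the basic sums
  have hlapφ : lap φ x
      = (d * g x ^ 3 * (∑ j : Fin n, pd v j x ^ 2) + 4 * g x ^ 3 / (d - 2))
          * (∑ j : Fin n, pd v j x ^ 2)
        + (-(d / 2) * g x ^ 2 * (∑ j : Fin n, pd v j x ^ 2) - 2 * g x ^ 2 / (d - 2)
            + 2 * lam / (d - 2)) * (∑ i : Fin n, hess v i i x)
        + (-2 * d * g x ^ 2) * (∑ i : Fin n, pd v i x * ∑ j : Fin n, pd v j x * hess v i j x)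
        + (d * g x) * (∑ i : Fin n, ∑ j : Fin n, pd v j x * pd (hess v i j) i x)
        + (d * g x) * (∑ i : Fin n, ∑ j : Fin n, hess v i j x ^ 2) := by
    have h0 : lap φ x = ∑ i : Fin n, pd (pd φ i) i x := rfl
    rw [h0, Finset.sum_congr rfl fun i _ => hsnd i]
    have e : ∀ i : Fin n,
        d / 2 * ((2 * g x ^ 3 * pd v i x ^ 2 - g x ^ 2 * hess v i i x)
              * (∑ j : Fin n, pd v j x ^ 2)
            - 4 * g x ^ 2 * pd v i x * (∑ j : Fin n, pd v j x * hess v i j x)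
            + 2 * g x * (∑ j : Fin n, pd v j x * pd (hess v i j) i x)
            + 2 * g x * (∑ j : Fin n, hess v i j x ^ 2))
          + 2 / (d - 2) * (2 * g x ^ 3 * pd v i x ^ 2 - g x ^ 2 * hess v i i x)
          + 2 * lam / (d - 2) * hess v i i x
        = (d * g x ^ 3 * (∑ j : Fin n, pd v j x ^ 2) + 4 * g x ^ 3 / (d - 2)) * pd v i x ^ 2
          + (-(d / 2) * g x ^ 2 * (∑ j : Fin n, pd v j x ^ 2) - 2 * g x ^ 2 / (d - 2)
              + 2 * lam / (d - 2)) * hess v i i x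
          + (-2 * d * g x ^ 2) * (pd v i x * ∑ j : Fin n, pd v j x * hess v i j x)
          + (d * g x) * (∑ j : Fin n, pd v j x * pd (hess v i j) i x)
          + (d * g x) * (∑ j : Fin n, hess v i j x ^ 2) := by
      intro i
      ring
    rw [Finset.sum_congr rfl fun i _ => e i]
    simp only [Finset.sum_add_distrib, ← Finset.mul_sum]
  -- expand the traceless Hessian square
  have hnne : (n : ℝ) ≠ 0 := Nat.cast_ne_zero.mpr hn.ne'
  have hsq : (∑ i : Fin n, ∑ j : Fin n, (hess v i j x - (if i = j then lap v x / n else 0)) ^ 2)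
      = (∑ i : Fin n, ∑ j : Fin n, hess v i j x ^ 2)
        - 2 * (lap v x / n) * (∑ i : Fin n, hess v i i x) + n * (lap v x / n) ^ 2 := by
    have e : ∀ i j : Fin n, (hess v i j x - (if i = j then lap v x / n else 0)) ^ 2
        = hess v i j x ^ 2
          - (if i = j then 2 * (lap v x / n) * hess v i j x - (lap v x / n) ^ 2 else 0) := by
      intro i j
      by_cases h : i = j <;> simp [h] <;> ring
    have e2 : ∀ i : Fin n,
        (∑ j : Fin n, (hess v i j x - (if i = j then lap v x / n else 0)) ^ 2)
        = (∑ j : Fin n, hess v i j x ^ 2)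
          - (2 * (lap v x / n) * hess v i i x - (lap v x / n) ^ 2) := by
      intro i
      rw [Finset.sum_congr rfl fun j _ => e i j, Finset.sum_sub_distrib]
      congr 1
      rw [Finset.sum_ite_eq]
      simp
    rw [Finset.sum_congr rfl fun i _ => e2 i, Finset.sum_sub_distrib, Finset.sum_sub_distrib,
      ← Finset.mul_sum, Finset.sum_const, Finset.card_univ, Fintype.card_fin, nsmul_eq_mul]
    ring
  -- put everything together
  rw [hsq, hlapφ, hgrad, hTT, hTT2]
  rw [show (∑ i : Fin n, hess v i i x) = lap v x from rfl]
  rw [hpde x]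
  simp only [hgdef]
  set s1 := ∑ i : Fin n, pd v i x ^ 2 with hs1
  set q := ∑ i : Fin n, pd v i x * ∑ j : Fin n, pd v j x * hess v i j x with hq
  set h2 := ∑ i : Fin n, ∑ j : Fin n, hess v i j x ^ 2 with hh2
  set V := v x with hV
  have hVne : V ≠ 0 := hvne x
  field_simp
  ring
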